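/- arXiv:2311.03225 — 2 statements merged into one kernel-verified Lean document; each statement's English description precedes it below -/
import Mathlib

section
/- Let T and P be lobsters with |V(P)| ≥ 2, let B = (b_1,…,b_s) be a backbone of P, and for each i ∈ {1,…,s} let P_i be the connected component of P − E(B) containing b_i. Then P is a minor of T if and only if there exist a path C = (c_1,…,c_t) in T and indices 1 = z_1 < z_2 < … < z_{s+1} = t+1 such that for every i ∈ {1,…,s} there is a minor embedding f_i of P_i in the tree T_{z_i, z_{i+1}−1} with f_i(w_i) = b_i, where T_{z_i, z_{i+1}−1} is obtained from the union of the connected components of T − E(C) containing c_{z_i},…,c_{z_{i+1}−1} by contracting the vertex set {c_{z_i},…,c_{z_{i+1}−1}} to a single new vertex w_i. -/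
/-!
A minor embedding `f` of a tree `T` onto a tree `P` sends every edge of `T` to an edge or a vertex
of `P`, and realizes every edge `pq` of `P` by exactly one edge `xy` of `T`; deleting `xy` from `T`
separates the preimages of the two sides of `P - pq`. Take for `C` the path from the fibre of `b₁`
to the fibre of `bₛ`. An edge of `C` joining two fibres separates these endpoints, so its image is
an edge of `B` traversed forwards: the image of `C` walks monotonically along `B`, which cuts `C`
into consecutive blocks, the `i`-th one mapped to `b_i`. The components of `T - E(C)` at the
`i`-th block are exactly the preimage of `P_i`, so contracting the block yields the embedding of
`P_i`.

Conversely, composing the contractions with the given embeddings of the `P_i` and gluing them along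
the edges of `C` between consecutive blocks, which realize the backbone edges, gives a minor
embedding of `T` onto `P`.
-/

/-- A minor embedding of `P` in `T`: a surjective `f : V(T) → V(P)` with connected preimages
of vertices such that every edge of `P` is realized by an edge of `T`. -/
def IsMinorEmbedding {V W : Type*} (T : SimpleGraph V) (P : SimpleGraph W) (f : V → W) : Prop :=
  Function.Surjective f ∧
  (∀ w : W, ((T.induce (f ⁻¹' {w})).Connected)) ∧
  (∀ ⦃u v : W⦄, P.Adj u v → ∃ u' v', T.Adj u' v' ∧ f u' = u ∧ f v' = v)

section Contraction
variable {V : Type*} (T : SimpleGraph V) {c₁ cₜ : V} (C : T.Walk c₁ cₜ)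

/-- The forest `T − E(C)`. -/
def forestOf : SimpleGraph V := T.deleteEdges {e | e ∈ C.edges}

/-- Membership in the union of the connected components of `T − E(C)` containing
`c_l,…,c_r` (0-based positions on `C`). -/
def inComps (l r : ℕ) (v : V) : Prop :=
  ∃ j, l ≤ j ∧ j ≤ r ∧ (forestOf T C).Reachable (C.support.getD j c₁) v

/-- `v` is one of the contracted vertices `c_l,…,c_r`. -/
def isCore (l r : ℕ) (v : V) : Prop :=
  ∃ j, l ≤ j ∧ j ≤ r ∧ C.support.getD j c₁ = v

/-- Vertices of the contracted tree `T_{l,r}`: the new vertex `w` (`none`) obtained by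
contracting `{c_l,…,c_r}`, together with the remaining vertices of the components. -/
def ContrVert (l r : ℕ) : Type _ :=
  Option {v : V // inComps T C l r v ∧ ¬ isCore T C l r v}

/-- Base adjacency of `T_{l,r}`: the contracted vertex is adjacent to every vertex adjacent
(in `T − E(C)`) to some `c_j`, `l ≤ j ≤ r`; other edges of the forest are kept. -/
def ContrRel (l r : ℕ) : ContrVert T C l r → ContrVert T C l r → Prop
  | none, some v => ∃ w, isCore T C l r w ∧ (forestOf T C).Adj w v.1
  | some v, some v' => (forestOf T C).Adj v.1 v'.1
  | _, _ => False

/-- The contracted tree `T_{l,r}`. -/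
def ContrTree (l r : ℕ) : SimpleGraph (ContrVert T C l r) :=
  SimpleGraph.fromRel (ContrRel T C l r)

end Contraction

section Component
variable {W : Type*} (P : SimpleGraph W) {b₁ bₛ : W} (B : P.Walk b₁ bₛ)

/-- The vertex set of the connected component `P_i` of `P − E(B)` containing `b_i`. -/
def compSet (i : ℕ) : Set W :=
  {v | (P.deleteEdges {e | e ∈ B.edges}).Reachable (B.support.getD i b₁) v}

/-- The component `P_i` of `P − E(B)` containing `b_i`, as a graph. -/
def compGraph (i : ℕ) : SimpleGraph (compSet P B i) :=
  (P.deleteEdges {e | e ∈ B.edges}).induce (compSet P B i)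

/-- The vertex `b_i` as a vertex of `P_i`. -/
def compRoot (i : ℕ) : compSet P B i :=
  ⟨B.support.getD i b₁, SimpleGraph.Reachable.refl _⟩

end Component

open SimpleGraph

namespace SimpleGraph

variable {V : Type*} {G : SimpleGraph V}

lemma reachable_of_forall_succ {x : ℕ → V} {a b : ℕ} (hab : a ≤ b)
    (h : ∀ n, a ≤ n → n < b → G.Reachable (x n) (x (n + 1))) : G.Reachable (x a) (x b) := by
  induction b, hab using Nat.le_induction with
  | base => rfl
  | succ b hab ih => exact (ih fun n h₁ h₂ => h n h₁ (by omega)).trans (h b hab (by omega))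

lemma Reachable.map_of_forall_adj {X : Type*} {H : SimpleGraph X} (m : V → X)
    (hm : ∀ a b, G.Adj a b → H.Reachable (m a) (m b)) {x y : V} (h : G.Reachable x y) :
    H.Reachable (m x) (m y) := by
  rw [reachable_iff_reflTransGen] at h ⊢
  exact Relation.ReflTransGen.lift' m (fun a b hab => (reachable_iff_reflTransGen _ _).mp
    (hm a b hab)) x y h

lemma induce_induce_connected_iff {A : Set V} {S : Set A} :
    ((G.induce A).induce S).Connected ↔ (G.induce (Subtype.val '' S)).Connected :=
  Iso.connected_iff
    { toEquiv := Equiv.Set.image Subtype.val S Subtype.val_injective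
      map_rel_iff' := Iff.rfl }

lemma IsAcyclic.not_reachable_deleteEdges (hG : G.IsAcyclic) {x y : V} (h : G.Adj x y) :
    ¬ (G.deleteEdges {s(x, y)}).Reachable x y :=
  isAcyclic_iff_forall_adj_isBridge.mp hG h

namespace Walk

variable {u v : V}

lemma support_getD_eq_getVert (p : G.Walk u v) {j : ℕ} (hj : j ≤ p.length) (d : V) :
    p.support.getD j d = p.getVert j := by
  rw [List.getD_eq_getElem _ _ (by rw [length_support]; omega), support_getElem_eq_getVert]

variable {p : G.Walk u v}

lemma IsPath.reachable_getVert_succ_deleteEdges (hp : p.IsPath) {j m : ℕ} (hj : j < p.length)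
    (hm : m ≠ j) :
    (G.deleteEdges {s(p.getVert j, p.getVert (j + 1))}).Reachable (p.getVert m)
      (p.getVert (m + 1)) := by
  rcases lt_or_ge m p.length with hml | hml
  · refine Adj.reachable (deleteEdges_adj.mpr ⟨p.adj_getVert_succ hml, ?_⟩)
    have inj := hp.getVert_injOn
    rintro (he : s(_, _) = _)
    rcases Sym2.eq_iff.mp he with ⟨h, -⟩ | ⟨h, h'⟩
    · exact hm (inj (by simp; omega) (by simp; omega) h)
    · have := inj (by simp; omega) (by simp; omega) h
      have := inj (by simp; omega) (by simp; omega) h'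
      omega
  · rw [p.getVert_of_length_le hml, p.getVert_of_length_le (i := m + 1) (by omega)]

lemma IsPath.reachable_getVert_deleteEdges_of_le (hp : p.IsPath) {j k : ℕ} (hj : j < p.length)
    (hk : k ≤ j) :
    (G.deleteEdges {s(p.getVert j, p.getVert (j + 1))}).Reachable (p.getVert k) (p.getVert j) :=
  reachable_of_forall_succ hk fun _ _ hn => hp.reachable_getVert_succ_deleteEdges hj (by omega)

lemma IsPath.reachable_getVert_deleteEdges_of_lt (hp : p.IsPath) {j k : ℕ} (hj : j < p.length)
    (hk : j < k) :
    (G.deleteEdges {s(p.getVert j, p.getVert (j + 1))}).Reachable (p.getVert (j + 1))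
      (p.getVert k) :=
  reachable_of_forall_succ hk fun _ hn _ => hp.reachable_getVert_succ_deleteEdges hj (by omega)

lemma IsPath.not_reachable_deleteEdges_of_mem_edges (hG : G.IsAcyclic) (hp : p.IsPath)
    {e : Sym2 V} (he : e ∈ p.edges) : ¬ (G.deleteEdges {e}).Reachable u v := by
  induction e with | h a b =>
  obtain ⟨j, hj, hje⟩ := p.mk_mem_edges_iff_exists.mp he
  rw [← hje]
  intro huv
  refine hG.not_reachable_deleteEdges (p.adj_getVert_succ hj) ?_
  have hu := hp.reachable_getVert_deleteEdges_of_le hj (Nat.zero_le j)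
  have hv := hp.reachable_getVert_deleteEdges_of_lt hj hj
  rw [getVert_zero] at hu
  rw [getVert_length] at hv
  exact hu.symm.trans (huv.trans hv.symm)

lemma IsPath.exists_getVert_of_reachable_deleteEdges (hG : G.IsAcyclic) (hp : p.IsPath)
    {x y : V} (hxy : G.Adj x y) (hux : (G.deleteEdges {s(x, y)}).Reachable u x)
    (hyv : (G.deleteEdges {s(x, y)}).Reachable y v) :
    ∃ k < p.length, p.getVert k = x ∧ p.getVert (k + 1) = y := by
  have bridge := hG.not_reachable_deleteEdges hxy
  have he : s(x, y) ∈ p.edges := by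
    by_contra he
    exact bridge (hux.symm.trans ((reachable_deleteEdges_iff_exists_walk.mpr ⟨p, he⟩).trans
      hyv.symm))
  obtain ⟨k, hk, hke⟩ := p.mk_mem_edges_iff_exists.mp he
  refine ⟨k, hk, ?_⟩
  rcases Sym2.eq_iff.mp hke with h | ⟨hy, hx⟩
  · exact h
  · -- traversed backwards, the prefix of `p` would join `u` to `y` avoiding `xy`
    have huy := hp.reachable_getVert_deleteEdges_of_le hk (Nat.zero_le k)
    rw [getVert_zero, hke, hy] at huy
    exact (bridge (hux.symm.trans huy)).elim

lemma IsPath.eq_of_reachable_deleteEdges_getVert (hG : G.IsAcyclic) (hp : p.IsPath)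
    {j j' : ℕ} (hj : j ≤ p.length) (hj' : j' ≤ p.length)
    (h : (G.deleteEdges {e | e ∈ p.edges}).Reachable (p.getVert j) (p.getVert j')) : j = j' := by
  wlog hlt : j < j' generalizing j j'
  · rcases eq_or_lt_of_le (not_lt.mp hlt) with h' | h'
    · exact h'.symm
    · exact (this hj' hj h.symm h').symm
  have hjl : j < p.length := by omega
  have hsub : G.deleteEdges {e | e ∈ p.edges} ≤
      G.deleteEdges {s(p.getVert j, p.getVert (j + 1))} :=
    deleteEdges_anti (by simpa using (p.mk_mem_edges_iff_exists.mpr ⟨j, hjl, rfl⟩))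
  exact absurd ((h.mono hsub).trans (hp.reachable_getVert_deleteEdges_of_lt hjl hlt).symm)
    (hG.not_reachable_deleteEdges (p.adj_getVert_succ hjl))

lemma exists_reachable_deleteEdges_getVert (hG : G.Connected) (p : G.Walk u v) (x : V) :
    ∃ j ≤ p.length, (G.deleteEdges {e | e ∈ p.edges}).Reachable (p.getVert j) x := by
  suffices key : ∀ y (q : G.Walk x y),
      (∃ j ≤ p.length, (G.deleteEdges {e | e ∈ p.edges}).Reachable (p.getVert j) y) →
      ∃ j ≤ p.length, (G.deleteEdges {e | e ∈ p.edges}).Reachable (p.getVert j) x from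
    key u (hG.preconnected x u).some ⟨0, Nat.zero_le _, by rw [getVert_zero]⟩
  intro y q
  induction q with
  | nil => exact id
  | @cons x a y hxa q ih =>
    intro hy
    by_cases he : s(x, a) ∈ p.edges
    · obtain ⟨j, hjx, hj⟩ := mem_support_iff_exists_getVert.mp (p.fst_mem_support_of_mem_edges he)
      exact ⟨j, hj, by rw [hjx]⟩
    · obtain ⟨j, hj, hja⟩ := ih hy
      exact ⟨j, hj, hja.trans (deleteEdges_adj.mpr ⟨hxa, he⟩).symm.reachable⟩

end Walk

end SimpleGraph

lemma val_image_preimage_singleton {V W : Type*} {f : V → W} {A : Set V} {S : Set W} {h : A → S}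
    (hf : ∀ v, (h v : W) = f v) (hA : ∀ v, f v ∈ S → v ∈ A) (w : S) :
    Subtype.val '' (h ⁻¹' {w}) = f ⁻¹' {(w : W)} := by
  ext v
  constructor
  · rintro ⟨a, ha, rfl⟩
    exact (hf a).symm.trans (congrArg Subtype.val ha)
  · intro (hv : f v = w)
    exact ⟨⟨v, hA v (hv ▸ w.2)⟩, Subtype.ext ((hf _).trans hv), rfl⟩

namespace IsMinorEmbedding

variable {V W X : Type*} {T : SimpleGraph V} {P : SimpleGraph W} {f : V → W}

lemma reachable_deleteEdges_of_eq (hf : IsMinorEmbedding T P f) {x y a b : V} (hxy : f x ≠ f y)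
    (hab : f a = f b) : (T.deleteEdges {s(x, y)}).Reachable a b := by
  refine ((hf.2.1 (f a)).preconnected ⟨a, rfl⟩ ⟨b, hab.symm⟩).map_of_forall_adj Subtype.val
    fun c d hcd => Adj.reachable (G := T.deleteEdges _) (deleteEdges_adj.mpr ⟨hcd, ?_⟩)
  rintro (he : s(_, _) = s(x, y))
  have hc : f c = f a := c.2
  have hd : f d = f a := d.2
  rcases Sym2.eq_iff.mp he with ⟨rfl, rfl⟩ | ⟨rfl, rfl⟩
  · exact hxy (hc.trans hd.symm)
  · exact hxy (hd.trans hc.symm)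

lemma eq_or_adj_of_adj (hf : IsMinorEmbedding T P f) (hT : T.IsAcyclic) (hP : P.Preconnected)
    {x y : V} (hxy : T.Adj x y) : f x = f y ∨ P.Adj (f x) (f y) := by
  by_contra! ⟨hne, hnadj⟩
  -- the fibres meeting the side of `x` in `T - xy` would be closed under adjacency in `P`
  let side : W → Prop := fun w => ∃ a, f a = w ∧ (T.deleteEdges {s(x, y)}).Reachable x a
  have hside : ∀ p q, P.Adj p q → side p → side q := by
    rintro p q hpq ⟨a, rfl, ha⟩
    obtain ⟨a', b', hab', ha', rfl⟩ := hf.2.2 hpq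
    have hxy' : s(a', b') ≠ s(x, y) := by
      intro he
      rcases Sym2.eq_iff.mp he with ⟨rfl, rfl⟩ | ⟨rfl, rfl⟩
      · exact hnadj (ha' ▸ hpq)
      · exact hnadj (ha' ▸ hpq.symm)
    exact ⟨b', rfl, (ha.trans (hf.reachable_deleteEdges_of_eq hne ha'.symm)).trans
      (deleteEdges_adj.mpr ⟨hab', hxy'⟩).reachable⟩
  have hwalk : ∀ {p q} (w : P.Walk p q), side p → side q := by
    intro p q w
    induction w with
    | nil => exact id
    | cons h _ ih => exact ih ∘ hside _ _ h
  obtain ⟨b, hb, hxb⟩ := hwalk (hP (f x) (f y)).some ⟨x, rfl, .refl _⟩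
  exact hT.not_reachable_deleteEdges hxy (hxb.trans (hf.reachable_deleteEdges_of_eq hne hb))

lemma sym2_eq_of_map_eq (hf : IsMinorEmbedding T P f) (hT : T.IsAcyclic) {x y a b : V}
    (hxy : T.Adj x y) (hne : f x ≠ f y) (hab : T.Adj a b) (h : s(f a, f b) = s(f x, f y)) :
    s(a, b) = s(x, y) := by
  have key : ∀ {a b}, T.Adj a b → f a = f x → f b = f y → s(a, b) = s(x, y) := by
    intro a b hab ha hb
    by_contra hab'
    exact hT.not_reachable_deleteEdges hxy (((hf.reachable_deleteEdges_of_eq hne ha.symm).trans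
      (deleteEdges_adj.mpr ⟨hab, hab'⟩).reachable).trans (hf.reachable_deleteEdges_of_eq hne hb))
  rcases Sym2.eq_iff.mp h with ⟨ha, hb⟩ | ⟨ha, hb⟩
  · exact key hab ha hb
  · rw [Sym2.eq_swap]
    exact key hab.symm hb ha

lemma reachable_deleteEdges (hf : IsMinorEmbedding T P f) (hT : T.IsAcyclic)
    (hP : P.Preconnected) {E : Set (Sym2 V)} {F : Set (Sym2 W)}
    (hEF : ∀ a b, T.Adj a b → s(f a, f b) ∈ F → s(a, b) ∈ E) {a b : V}
    (h : (T.deleteEdges E).Reachable a b) : (P.deleteEdges F).Reachable (f a) (f b) := by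
  refine h.map_of_forall_adj f fun c d hcd => ?_
  obtain ⟨hcd, hcdE⟩ := deleteEdges_adj.mp hcd
  rcases hf.eq_or_adj_of_adj hT hP hcd with heq | hadj
  · rw [heq]
  · exact (deleteEdges_adj.mpr ⟨hadj, fun hF => hcdE (hEF c d hcd hF)⟩).reachable

lemma reachable_deleteEdges_singleton (hf : IsMinorEmbedding T P f) (hT : T.IsAcyclic)
    (hP : P.Preconnected) {x y a b : V} (hxy : T.Adj x y) (hne : f x ≠ f y)
    (h : (T.deleteEdges {s(x, y)}).Reachable a b) :
    (P.deleteEdges {s(f x, f y)}).Reachable (f a) (f b) :=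
  hf.reachable_deleteEdges hT hP
    (fun _ _ hab he => hf.sym2_eq_of_map_eq (x := x) (y := y) hT hxy hne hab he) h

lemma mem_edges_of_not_reachable (hf : IsMinorEmbedding T P f) (hT : T.IsAcyclic)
    (hP : P.Preconnected) {u v x y : V} (C : T.Walk u v) (hxy : T.Adj x y) (hne : f x ≠ f y)
    (h : ¬ (P.deleteEdges {s(f x, f y)}).Reachable (f u) (f v)) : s(x, y) ∈ C.edges := by
  by_contra hC
  exact h (hf.reachable_deleteEdges_singleton hT hP hxy hne
    (reachable_deleteEdges_iff_exists_walk.mpr ⟨C, hC⟩))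

lemma connected_induce_preimage (hf : IsMinorEmbedding T P f) {S : Set W}
    (hS : (P.induce S).Connected) : (T.induce (f ⁻¹' S)).Connected := by
  let σ : S → f ⁻¹' S := fun w => ⟨Function.surjInv hf.1 w,
    show f _ ∈ S from (Function.surjInv_eq hf.1 w).symm ▸ w.2⟩
  have fibre : ∀ a b : f ⁻¹' S, f a = f b → (T.induce (f ⁻¹' S)).Reachable a b := by
    intro a b hab
    have hsub : f ⁻¹' {f a.1} ⊆ f ⁻¹' S := fun c (hc : f c = f a) => show f c ∈ S from hc ▸ a.2
    exact ((hf.2.1 (f a)).preconnected ⟨a, rfl⟩ ⟨b, hab.symm⟩).map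
      (induceHomOfLE T hsub).toHom
  have hσ : ∀ a : f ⁻¹' S, f (σ ⟨f a, a.2⟩) = f a := fun a => Function.surjInv_eq hf.1 _
  have hstep : ∀ p q : S, (P.induce S).Adj p q → (T.induce (f ⁻¹' S)).Reachable (σ p) (σ q) := by
    rintro ⟨p, hp⟩ ⟨q, hq⟩ hpq
    obtain ⟨a, b, hab, rfl, rfl⟩ := hf.2.2 hpq
    exact ((fibre (σ _) ⟨a, hp⟩ (hσ ⟨a, hp⟩)).trans (Adj.reachable (G := T.induce (f ⁻¹' S))
      (u := ⟨a, hp⟩) (v := ⟨b, hq⟩) hab)).trans (fibre ⟨b, hq⟩ (σ _) (hσ ⟨b, hq⟩).symm)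
  rw [connected_iff]
  refine ⟨fun a b => ?_, ⟨σ hS.nonempty.some⟩⟩
  exact ((fibre a (σ ⟨f a, a.2⟩) (hσ a).symm).trans ((hS.preconnected ⟨f a, a.2⟩
    ⟨f b, b.2⟩).map_of_forall_adj σ hstep)).trans (fibre (σ ⟨f b, b.2⟩) b (hσ b))

lemma comp {G : SimpleGraph X} {π : V → X} {g : X → W} (hπ : IsMinorEmbedding T G π)
    (hg : IsMinorEmbedding G P g) : IsMinorEmbedding T P (g ∘ π) := by
  refine ⟨hg.1.comp hπ.1, fun w => hπ.connected_induce_preimage (hg.2.1 w), fun u w h => ?_⟩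
  obtain ⟨p, q, hpq, rfl, rfl⟩ := hg.2.2 h
  obtain ⟨a, b, hab, rfl, rfl⟩ := hπ.2.2 hpq
  exact ⟨a, b, hab, rfl, rfl⟩

lemma exists_factor {G : SimpleGraph X} (hf : IsMinorEmbedding T P f) {π : V → X}
    (hπ : Function.Surjective π) (hπadj : ∀ a b, T.Adj a b → π a = π b ∨ G.Adj (π a) (π b))
    (hconst : ∀ a b, π a = π b → f a = f b) :
    ∃ g : X → W, IsMinorEmbedding G P g ∧ ∀ v, g (π v) = f v := by
  set g := f ∘ Function.surjInv hπ
  have hgπ : ∀ v, g (π v) = f v := fun v => hconst _ _ (Function.surjInv_eq hπ _)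
  refine ⟨g, ⟨fun w => ?_, fun w => ?_, fun u w huw => ?_⟩, hgπ⟩
  · obtain ⟨a, rfl⟩ := hf.1 w
    exact ⟨π a, hgπ a⟩
  · let m : f ⁻¹' {w} → g ⁻¹' {w} := fun a => ⟨π a, show g _ = w from (hgπ a).trans a.2⟩
    have hm : ∀ p : g ⁻¹' {w}, m ⟨Function.surjInv hπ p, p.2⟩ = p :=
      fun p => Subtype.ext (Function.surjInv_eq hπ p)
    obtain ⟨a, ha⟩ := hf.1 w
    rw [connected_iff]
    refine ⟨fun p q => ?_, ⟨m ⟨a, ha⟩⟩⟩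
    rw [← hm p, ← hm q]
    refine ((hf.2.1 w).preconnected _ _).map_of_forall_adj m fun c d hcd => ?_
    rcases hπadj c d hcd with h | h
    · exact (Subtype.ext h : m c = m d) ▸ .refl _
    · exact Adj.reachable (G := G.induce _) h
  · obtain ⟨a, b, hab, rfl, rfl⟩ := hf.2.2 huw
    refine ⟨π a, π b, (hπadj a b hab).resolve_left fun h => huw.ne (hconst a b h), hgπ a, hgπ b⟩

lemma restrict (hf : IsMinorEmbedding T P f) {A : Set V} {S : Set W}
    (hAS : ∀ v, v ∈ A ↔ f v ∈ S) {H : SimpleGraph S} (hH : ∀ {u w : S}, H.Adj u w → P.Adj u w) :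
    IsMinorEmbedding (T.induce A) H fun v => ⟨f v, (hAS v).mp v.2⟩ := by
  refine ⟨fun w => ?_, fun w => ?_, fun u w huw => ?_⟩
  · obtain ⟨a, ha⟩ := hf.1 w
    exact ⟨⟨a, (hAS a).mpr (ha ▸ w.2)⟩, Subtype.ext ha⟩
  · rw [induce_induce_connected_iff, val_image_preimage_singleton (f := f) (fun _ => rfl)
      (fun v => (hAS v).mpr)]
    exact hf.2.1 w
  · obtain ⟨a, b, hab, ha, hb⟩ := hf.2.2 (hH huw)
    exact ⟨⟨a, (hAS a).mpr (ha ▸ u.2)⟩, ⟨b, (hAS b).mpr (hb ▸ w.2)⟩, hab, Subtype.ext ha,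
      Subtype.ext hb⟩

lemma of_forall_part {ι : Type*} {A : ι → Set V} {S : ι → Set W} {H : ∀ i, SimpleGraph (S i)}
    {h : ∀ i, A i → S i} (hh : ∀ i, IsMinorEmbedding (T.induce (A i)) (H i) (h i))
    (hhf : ∀ i v, (h i v : W) = f v) (hS : ∀ w, ∃ i, w ∈ S i)
    (hA : ∀ i v, f v ∈ S i → v ∈ A i)
    (hP : ∀ ⦃u w⦄, P.Adj u w → (∃ i, ∃ (hu : u ∈ S i) (hw : w ∈ S i), (H i).Adj ⟨u, hu⟩ ⟨w, hw⟩) ∨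
      ∃ a b, T.Adj a b ∧ f a = u ∧ f b = w) :
    IsMinorEmbedding T P f := by
  refine ⟨fun w => ?_, fun w => ?_, fun u w huw => ?_⟩
  · obtain ⟨i, hi⟩ := hS w
    obtain ⟨a, ha⟩ := (hh i).1 ⟨w, hi⟩
    exact ⟨a, (hhf i a).symm.trans (congrArg Subtype.val ha)⟩
  · obtain ⟨i, hi⟩ := hS w
    have := (hh i).2.1 ⟨w, hi⟩
    rwa [induce_induce_connected_iff, val_image_preimage_singleton (hhf i) (hA i)] at this
  · rcases hP huw with ⟨i, hu, hw, hadj⟩ | h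
    · obtain ⟨a, b, hab, ha, hb⟩ := (hh i).2.2 hadj
      exact ⟨a, b, hab, (hhf i a).symm.trans (congrArg Subtype.val ha),
        (hhf i b).symm.trans (congrArg Subtype.val hb)⟩
    · exact h

end IsMinorEmbedding

section Contraction

variable {V : Type*} {T : SimpleGraph V} {c₁ cₜ : V} {C : T.Walk c₁ cₜ} {l r : ℕ} {v : V}

lemma inComps_iff (hr : r ≤ C.length) :
    inComps T C l r v ↔ ∃ j, l ≤ j ∧ j ≤ r ∧ (forestOf T C).Reachable (C.getVert j) v :=
  exists_congr fun _ => and_congr_right fun _ => and_congr_right fun hj => by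
    rw [C.support_getD_eq_getVert (hj.trans hr)]

lemma isCore_iff (hr : r ≤ C.length) :
    isCore T C l r v ↔ ∃ j, l ≤ j ∧ j ≤ r ∧ C.getVert j = v :=
  exists_congr fun _ => and_congr_right fun _ => and_congr_right fun hj => by
    rw [C.support_getD_eq_getVert (hj.trans hr)]

lemma isCore.inComps (h : isCore T C l r v) : inComps T C l r v := by
  obtain ⟨j, hl, hr, rfl⟩ := h
  exact ⟨j, hl, hr, .refl _⟩

lemma isCore_of_mem_support (hT : T.IsAcyclic) (hC : C.IsPath) (hr : r ≤ C.length)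
    (hv : v ∈ C.support) (hin : inComps T C l r v) : isCore T C l r v := by
  obtain ⟨j, rfl, hj⟩ := Walk.mem_support_iff_exists_getVert.mp hv
  obtain ⟨j', hlj', hj'r, hreach⟩ := (inComps_iff hr).mp hin
  obtain rfl := hC.eq_of_reachable_deleteEdges_getVert hT (hj'r.trans hr) hj hreach
  exact (isCore_iff hr).mpr ⟨j', hlj', hj'r, rfl⟩

lemma forestOf_adj_of_not_isCore (hT : T.IsAcyclic) (hC : C.IsPath) (hr : r ≤ C.length)
    {a b : V} (hab : T.Adj a b) (hb : inComps T C l r b) (hb' : ¬ isCore T C l r b) :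
    (forestOf T C).Adj a b :=
  deleteEdges_adj.mpr ⟨hab, fun he => hb' (isCore_of_mem_support hT hC hr
    (C.snd_mem_support_of_mem_edges he) hb)⟩

lemma connected_induce_isCore (hlr : l ≤ r) (hr : r ≤ C.length) :
    (T.induce {v | isCore T C l r v}).Connected := by
  let x : ℕ → {v | isCore T C l r v} := fun n => ⟨C.getVert (max l (min n r)),
    (isCore_iff hr).mpr ⟨_, le_max_left _ _, max_le hlr (min_le_right _ _), rfl⟩⟩
  have hx : ∀ n, l ≤ n → n ≤ r → (x n : V) = C.getVert n := fun n h₁ h₂ => by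
    simp only [x, min_eq_left h₂, max_eq_right h₁]
  rw [connected_iff_exists_forall_reachable]
  refine ⟨x l, fun ⟨v, hv⟩ => ?_⟩
  obtain ⟨j, hlj, hjr, rfl⟩ := (isCore_iff hr).mp hv
  rw [show (⟨C.getVert j, hv⟩ : {v | isCore T C l r v}) = x j from
    (Subtype.ext (hx j hlj hjr)).symm]
  refine reachable_of_forall_succ hlj fun n hln hnj => Adj.reachable ?_
  change T.Adj (x n : V) (x (n + 1))
  rw [hx n hln (by omega), hx (n + 1) (by omega) (by omega)]
  exact C.adj_getVert_succ (by omega)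

variable (T C l r) in
open Classical in
noncomputable def contrMap (v : {v | inComps T C l r v}) : ContrVert T C l r :=
  if h : isCore T C l r v then none else some ⟨v, v.2, h⟩

variable {a b : {v | inComps T C l r v}}

lemma contrMap_of_isCore (h : isCore T C l r a) : contrMap T C l r a = none := dif_pos h

lemma contrMap_of_not_isCore (h : ¬ isCore T C l r a) :
    contrMap T C l r a = some ⟨a, a.2, h⟩ := dif_neg h

lemma isCore_or_eq_of_contrMap_eq (h : contrMap T C l r a = contrMap T C l r b) :
    isCore T C l r a ∧ isCore T C l r b ∨ a = b := by
  by_cases ha : isCore T C l r a <;> by_cases hb : isCore T C l r b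
  · exact .inl ⟨ha, hb⟩
  · rw [contrMap_of_isCore ha, contrMap_of_not_isCore hb] at h
    exact (Option.some_ne_none _ h.symm).elim
  · rw [contrMap_of_not_isCore ha, contrMap_of_isCore hb] at h
    exact (Option.some_ne_none _ h).elim
  · rw [contrMap_of_not_isCore ha, contrMap_of_not_isCore hb] at h
    injection h with h
    exact .inr (Subtype.ext (Subtype.mk.inj h))

lemma contrMap_surjective (hlr : l ≤ r) : Function.Surjective (contrMap T C l r) := by
  rintro (_ | w)
  · have hcore : isCore T C l r (C.support.getD l c₁) := ⟨l, le_rfl, hlr, rfl⟩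
    exact ⟨⟨_, hcore.inComps⟩, contrMap_of_isCore hcore⟩
  · exact ⟨⟨w, w.2.1⟩, contrMap_of_not_isCore w.2.2⟩

lemma val_image_contrMap_preimage_none :
    Subtype.val '' (contrMap T C l r ⁻¹' {none}) = {v | isCore T C l r v} := by
  ext v
  refine ⟨?_, fun hv => ⟨⟨v, hv.inComps⟩, contrMap_of_isCore hv, rfl⟩⟩
  rintro ⟨a, ha, rfl⟩
  by_contra hcore
  exact Option.some_ne_none _ ((contrMap_of_not_isCore hcore).symm.trans ha)

lemma connected_induce_preimage_contrMap (hlr : l ≤ r) (hr : r ≤ C.length)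
    (X : ContrVert T C l r) :
    ((T.induce {v | inComps T C l r v}).induce (contrMap T C l r ⁻¹' {X})).Connected := by
  rcases X with _ | w
  · rw [induce_induce_connected_iff]
    exact val_image_contrMap_preimage_none ▸ connected_induce_isCore hlr hr
  · rw [connected_iff_exists_forall_reachable]
    have hw : contrMap T C l r ⟨w, w.2.1⟩ = some w := contrMap_of_not_isCore w.2.2
    refine ⟨⟨_, hw⟩, fun ⟨a, ha⟩ => ?_⟩
    obtain ⟨hcore, -⟩ | rfl := isCore_or_eq_of_contrMap_eq (ha.trans hw.symm)
    · exact (Option.some_ne_none _ (ha.symm.trans (contrMap_of_isCore hcore))).elim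
    · rfl

lemma exists_adj_of_contrRel {X Y : ContrVert T C l r} (h : ContrRel T C l r X Y) :
    ∃ a b, (T.induce {v | inComps T C l r v}).Adj a b ∧
      contrMap T C l r a = X ∧ contrMap T C l r b = Y := by
  rcases X with _ | x <;> rcases Y with _ | y
  · exact h.elim
  · obtain ⟨w, hw, hwy⟩ := h
    exact ⟨⟨w, hw.inComps⟩, ⟨y, y.2.1⟩, (deleteEdges_adj.mp hwy).1, contrMap_of_isCore hw,
      contrMap_of_not_isCore y.2.2⟩
  · exact h.elim
  · exact ⟨⟨x, x.2.1⟩, ⟨y, y.2.1⟩, (deleteEdges_adj.mp h).1, contrMap_of_not_isCore x.2.2,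
      contrMap_of_not_isCore y.2.2⟩

lemma isMinorEmbedding_contrMap (hlr : l ≤ r) (hr : r ≤ C.length) :
    IsMinorEmbedding (T.induce {v | inComps T C l r v}) (ContrTree T C l r) (contrMap T C l r) := by
  refine ⟨contrMap_surjective hlr, connected_induce_preimage_contrMap hlr hr, fun X Y hXY => ?_⟩
  rcases ((fromRel_adj _ X Y).mp hXY).2 with h | h
  · exact exists_adj_of_contrRel h
  · obtain ⟨a, b, hab, ha, hb⟩ := exists_adj_of_contrRel h
    exact ⟨b, a, hab.symm, hb, ha⟩

lemma contrMap_eq_or_adj (hT : T.IsAcyclic) (hC : C.IsPath) (hr : r ≤ C.length)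
    (hab : (T.induce {v | inComps T C l r v}).Adj a b) :
    contrMap T C l r a = contrMap T C l r b ∨
      (ContrTree T C l r).Adj (contrMap T C l r a) (contrMap T C l r b) := by
  have hab : T.Adj a b := hab
  by_cases ha : isCore T C l r a <;> by_cases hb : isCore T C l r b
  · exact .inl ((contrMap_of_isCore ha).trans (contrMap_of_isCore hb).symm)
  · rw [contrMap_of_isCore ha, contrMap_of_not_isCore hb]
    exact .inr ((fromRel_adj _ _ _).mpr ⟨(Option.some_ne_none _).symm,
      .inl ⟨a, ha, forestOf_adj_of_not_isCore hT hC hr hab b.2 hb⟩⟩)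
  · rw [contrMap_of_not_isCore ha, contrMap_of_isCore hb]
    exact .inr ((fromRel_adj _ _ _).mpr ⟨Option.some_ne_none _,
      .inr ⟨b, hb, forestOf_adj_of_not_isCore hT hC hr hab.symm a.2 ha⟩⟩)
  · rw [contrMap_of_not_isCore ha, contrMap_of_not_isCore hb]
    refine .inr ((fromRel_adj _ _ _).mpr
      ⟨fun h => hab.ne ?_, .inl (forestOf_adj_of_not_isCore hT hC hr hab b.2 hb)⟩)
    injection h with h
    exact Subtype.mk.inj h

end Contraction

section Blocks

variable {z : ℕ → ℕ} {s : ℕ}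

lemma block_bounds (hz : ∀ i < s, z i < z (i + 1)) {n : ℕ} (hlast : z s = n + 1) {i : ℕ}
    (hi : i < s) : z i ≤ z (i + 1) - 1 ∧ z (i + 1) - 1 ≤ n := by
  have := (strictMonoOn_Iic_of_lt_succ hz).monotoneOn (show i + 1 ∈ Set.Iic s from hi)
    (Set.mem_Iic.mpr le_rfl) hi
  have := hz i hi
  omega

lemma exists_block (h0 : z 0 = 0) (hz : ∀ i < s, z i < z (i + 1)) {j : ℕ} (hj : j < z s) :
    ∃ i < s, z i ≤ j ∧ j < z (i + 1) := by
  induction s with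
  | zero => omega
  | succ s ih =>
    by_cases hjs : j < z s
    · obtain ⟨i, hi, h⟩ := ih (fun i hi => hz i (by omega)) hjs
      exact ⟨i, by omega, h⟩
    · exact ⟨s, by omega, by omega, hj⟩

lemma block_unique (hz : ∀ i < s, z i < z (i + 1)) {i i' j : ℕ} (hi : i < s) (hi' : i' < s)
    (h : z i ≤ j ∧ j < z (i + 1)) (h' : z i' ≤ j ∧ j < z (i' + 1)) : i = i' := by
  have hmono := (strictMonoOn_Iic_of_lt_succ hz).monotoneOn
  by_contra hne
  rcases lt_or_gt_of_ne hne with hlt | hlt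
  · have := hmono (show i + 1 ∈ Set.Iic s from hi) (show i' ∈ Set.Iic s from hi'.le) hlt
    omega
  · have := hmono (show i' + 1 ∈ Set.Iic s from hi') (show i ∈ Set.Iic s from hi.le) hlt
    omega

lemma exists_eq_of_le_succ {ι : ℕ → ℕ} (h0 : ι 0 = 0) (hstep : ∀ j, ι (j + 1) ≤ ι j + 1)
    {n i : ℕ} (hi : i ≤ ι n) : ∃ j ≤ n, ι j = i := by
  induction n with
  | zero => exact ⟨0, le_rfl, by omega⟩
  | succ n ih =>
    by_cases hin : i ≤ ι n
    · obtain ⟨j, hj, h⟩ := ih hin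
      exact ⟨j, by omega, h⟩
    · exact ⟨n + 1, le_rfl, by have := hstep n; omega⟩

lemma exists_blocks_of_monotone {ι : ℕ → ℕ} (hmono : Monotone ι) (h0 : ι 0 = 0)
    (hstep : ∀ j, ι (j + 1) ≤ ι j + 1) (n : ℕ) :
    ∃ z : ℕ → ℕ, z 0 = 0 ∧ z (ι n + 1) = n + 1 ∧ (∀ i < ι n + 1, z i < z (i + 1)) ∧
      ∀ j ≤ n, ∀ i < ι n + 1, (ι j = i ↔ z i ≤ j ∧ j ≤ z (i + 1) - 1) := by
  have hex : ∀ i, ∃ j, i ≤ ι j ∨ n < j := fun _ => ⟨n + 1, .inr (Nat.lt_succ_self n)⟩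
  -- `z i` is the first index at which `ι` reaches `i`, or `n + 1` if there is none up to `n`
  let z : ℕ → ℕ := fun i => Nat.find (hex i)
  have hz : ∀ j ≤ n, ∀ i, j < z i ↔ ι j < i := fun j hj i => by
    simp only [z, Nat.lt_find_iff, not_or, not_le, not_lt]
    exact ⟨fun h => (h j le_rfl).1, fun h k hk => ⟨(hmono hk).trans_lt h, hk.trans hj⟩⟩
  have hblock : ∀ j ≤ n, ∀ i, (ι j = i ↔ z i ≤ j ∧ j < z (i + 1)) := fun j hj i => by
    rw [← not_lt, hz j hj, hz j hj]
    omega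
  have hlt : ∀ i < ι n + 1, z i < z (i + 1) := fun i hi => by
    obtain ⟨j, hj, hji⟩ := exists_eq_of_le_succ h0 hstep (Nat.le_of_lt_succ hi)
    have := (hblock j hj i).mp hji
    omega
  refine ⟨z, (Nat.find_eq_zero _).mpr (.inl (Nat.zero_le _)), ?_, hlt, fun j hj i hi => ?_⟩
  · refine le_antisymm (Nat.find_min' _ (.inr (Nat.lt_succ_self n))) ?_
    exact Nat.succ_le_of_lt ((hz n le_rfl _).mpr (Nat.lt_succ_self _))
  · rw [hblock j hj i]
    have := hlt i hi
    omega

end Blocks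

section Component

variable {W : Type*} {P : SimpleGraph W} {b₁ bₛ : W} {B : P.Walk b₁ bₛ} {i : ℕ}

lemma mem_compSet_iff (hi : i ≤ B.length) {w : W} :
    w ∈ compSet P B i ↔ (P.deleteEdges {e | e ∈ B.edges}).Reachable (B.getVert i) w := by
  rw [← B.support_getD_eq_getVert hi b₁]
  rfl

lemma compRoot_val (hi : i ≤ B.length) : (compRoot P B i : W) = B.getVert i :=
  B.support_getD_eq_getVert hi b₁

lemma eq_of_mem_compSet (hP : P.IsAcyclic) (hB : B.IsPath) {i' : ℕ} (hi : i ≤ B.length)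
    (hi' : i' ≤ B.length) {w : W} (hw : w ∈ compSet P B i) (hw' : w ∈ compSet P B i') :
    i = i' :=
  hB.eq_of_reachable_deleteEdges_getVert hP hi hi'
    (((mem_compSet_iff hi).mp hw).trans ((mem_compSet_iff hi').mp hw').symm)

lemma exists_mem_compSet (hP : P.Connected) (w : W) : ∃ i ≤ B.length, w ∈ compSet P B i := by
  obtain ⟨i, hi, hw⟩ := B.exists_reachable_deleteEdges_getVert hP w
  exact ⟨i, hi, (mem_compSet_iff hi).mpr hw⟩

lemma exists_compGraph_adj (hP : P.Connected) {u w : W} (huw : P.Adj u w)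
    (he : s(u, w) ∉ B.edges) : ∃ i ≤ B.length, ∃ (hu : u ∈ compSet P B i) (hw : w ∈ compSet P B i),
      (compGraph P B i).Adj ⟨u, hu⟩ ⟨w, hw⟩ := by
  have hQ : (P.deleteEdges {e | e ∈ B.edges}).Adj u w := deleteEdges_adj.mpr ⟨huw, he⟩
  obtain ⟨i, hi, hu⟩ := exists_mem_compSet (B := B) hP u
  exact ⟨i, hi, hu, (mem_compSet_iff hi).mpr (((mem_compSet_iff hi).mp hu).trans hQ.reachable), hQ⟩

end Component

section Forward

variable {V W : Type*} {T : SimpleGraph V} {P : SimpleGraph W} {f : V → W}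
  {b₁ bₛ : W} {B : P.Walk b₁ bₛ} {x y : V} {C : T.Walk x y}

namespace IsMinorEmbedding

lemma eq_or_step_getVert (hT : T.IsTree) (hP : P.IsTree) (hf : IsMinorEmbedding T P f)
    (hB : B.IsPath) (hC : C.IsPath) (hx : f x = b₁) (hy : f y = bₛ) (j : ℕ) :
    f (C.getVert j) = f (C.getVert (j + 1)) ∨
      ∃ k < B.length,
        B.getVert k = f (C.getVert j) ∧ B.getVert (k + 1) = f (C.getVert (j + 1)) := by
  by_cases heq : f (C.getVert j) = f (C.getVert (j + 1))
  · exact .inl heq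
  have hj : j < C.length := by
    by_contra hj
    rw [C.getVert_of_length_le (not_lt.mp hj), C.getVert_of_length_le (by omega)] at heq
    exact heq rfl
  have hadj := C.adj_getVert_succ hj
  have hPadj := (hf.eq_or_adj_of_adj hT.isAcyclic hP.connected.preconnected hadj).resolve_left heq
  have hxj := hf.reachable_deleteEdges_singleton hT.isAcyclic hP.connected.preconnected hadj heq
    (hC.reachable_getVert_deleteEdges_of_le hj (Nat.zero_le j))
  have hjy := hf.reachable_deleteEdges_singleton hT.isAcyclic hP.connected.preconnected hadj heq
    (hC.reachable_getVert_deleteEdges_of_lt hj hj)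
  rw [Walk.getVert_zero, hx] at hxj
  rw [Walk.getVert_length, hy] at hjy
  exact .inr (hB.exists_getVert_of_reachable_deleteEdges hP.isAcyclic hPadj hxj hjy)

lemma exists_monotone_index (hT : T.IsTree) (hP : P.IsTree) (hf : IsMinorEmbedding T P f)
    (hB : B.IsPath) (hC : C.IsPath) (hx : f x = b₁) (hy : f y = bₛ) :
    ∃ ι : ℕ → ℕ, Monotone ι ∧ ι 0 = 0 ∧ (∀ j, ι (j + 1) ≤ ι j + 1) ∧ ι C.length = B.length ∧
      (∀ j, ι j ≤ B.length) ∧ ∀ j, f (C.getVert j) = B.getVert (ι j) := by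
  have step := hf.eq_or_step_getVert hT hP hB hC hx hy
  have hex : ∀ j, ∃ k ≤ B.length, f (C.getVert j) = B.getVert k := by
    intro j
    induction j with
    | zero => exact ⟨0, Nat.zero_le _, by rw [Walk.getVert_zero, Walk.getVert_zero, hx]⟩
    | succ j ih =>
      obtain ⟨k, hk, hfk⟩ := ih
      rcases step j with h | ⟨k', hk', -, h⟩
      · exact ⟨k, hk, h.symm.trans hfk⟩
      · exact ⟨k' + 1, hk', h.symm⟩
  choose ι hιB hfι using hex
  have inj : ∀ {k k'}, k ≤ B.length → k' ≤ B.length → B.getVert k = B.getVert k' → k = k' :=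
    fun hk hk' h => hB.getVert_injOn hk hk' h
  have hstep : ∀ j, ι j ≤ ι (j + 1) ∧ ι (j + 1) ≤ ι j + 1 := fun j => by
    rcases step j with h | ⟨k, hk, h₁, h₂⟩
    · have := inj (hιB j) (hιB (j + 1)) (((hfι j).symm.trans h).trans (hfι (j + 1)))
      omega
    · have := inj (hιB j) hk.le ((hfι j).symm.trans h₁.symm)
      have := inj (hιB (j + 1)) hk ((hfι (j + 1)).symm.trans h₂.symm)
      omega
  refine ⟨ι, monotone_nat_of_le_succ fun j => (hstep j).1, ?_, fun j => (hstep j).2, ?_, hιB, hfι⟩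
  · exact inj (hιB 0) (Nat.zero_le _) (by rw [← hfι, Walk.getVert_zero, Walk.getVert_zero, hx])
  · exact inj (hιB _) le_rfl (by rw [← hfι, Walk.getVert_length, Walk.getVert_length, hy])

lemma reachable_forestOf (hT : T.IsTree) (hP : P.IsTree) (hf : IsMinorEmbedding T P f)
    (hB : B.IsPath) (hx : f x = b₁) (hy : f y = bₛ) {a b : V}
    (h : (forestOf T C).Reachable a b) :
    (P.deleteEdges {e | e ∈ B.edges}).Reachable (f a) (f b) := by
  -- an edge of `T` mapped onto an edge of `B` realizes it, so `C` has to cross it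
  refine hf.reachable_deleteEdges hT.isAcyclic hP.connected.preconnected
    (fun a b hab he => ?_) h
  refine hf.mem_edges_of_not_reachable hT.isAcyclic hP.connected.preconnected C hab
    (B.adj_of_mem_edges he).ne ?_
  rw [hx, hy]
  exact hB.not_reachable_deleteEdges_of_mem_edges hP.isAcyclic he

lemma inComps_iff_mem_compSet (hT : T.IsTree) (hP : P.IsTree) (hf : IsMinorEmbedding T P f)
    (hB : B.IsPath) (hC : C.IsPath) (hx : f x = b₁) (hy : f y = bₛ) {ι : ℕ → ℕ}
    (hιB : ∀ j, ι j ≤ B.length) (hfι : ∀ j, f (C.getVert j) = B.getVert (ι j)) {l r i : ℕ}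
    (hr : r ≤ C.length) (hi : i ≤ B.length) (hblock : ∀ j ≤ C.length, ι j = i ↔ l ≤ j ∧ j ≤ r)
    (v : V) : inComps T C l r v ↔ f v ∈ compSet P B i := by
  obtain ⟨j, hj, hjv⟩ := C.exists_reachable_deleteEdges_getVert hT.connected v
  have hfv := hf.reachable_forestOf hT hP hB hx hy hjv
  rw [hfι] at hfv
  rw [inComps_iff hr, mem_compSet_iff hi]
  constructor
  · rintro ⟨j', hlj', hj'r, hj'v⟩
    obtain rfl := hC.eq_of_reachable_deleteEdges_getVert hT.isAcyclic (hj'r.trans hr) hj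
      (hj'v.trans hjv.symm)
    rwa [← (hblock j' hj).mpr ⟨hlj', hj'r⟩]
  · intro hiv
    have hji := hB.eq_of_reachable_deleteEdges_getVert hP.isAcyclic (hιB j) hi (hfv.trans hiv.symm)
    obtain ⟨hlj, hjr⟩ := (hblock j hj).mp hji
    exact ⟨j, hlj, hjr, hjv⟩

lemma exists_contrTree (hT : T.IsAcyclic) (hC : C.IsPath) (hf : IsMinorEmbedding T P f)
    {S : Set W} {H : SimpleGraph S} (hH : ∀ {u w : S}, H.Adj u w → P.Adj u w) {l r : ℕ}
    (hlr : l ≤ r) (hr : r ≤ C.length) (hS : ∀ v, inComps T C l r v ↔ f v ∈ S) {w₀ : W}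
    (hcore : ∀ v, isCore T C l r v → f v = w₀) :
    ∃ g : ContrVert T C l r → S, IsMinorEmbedding (ContrTree T C l r) H g ∧ (g none : W) = w₀ := by
  obtain ⟨g, hg, hgπ⟩ := (hf.restrict (A := {v | inComps T C l r v}) hS hH).exists_factor
    (contrMap_surjective hlr) (fun a b hab => contrMap_eq_or_adj hT hC hr hab) fun a b hab => by
      rcases isCore_or_eq_of_contrMap_eq hab with ⟨ha, hb⟩ | rfl
      · exact Subtype.ext ((hcore a ha).trans (hcore b hb).symm)
      · rfl
  have hc : isCore T C l r (C.getVert l) := (isCore_iff hr).mpr ⟨l, le_rfl, hlr, rfl⟩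
  have hroot := hgπ ⟨_, hc.inComps⟩
  rw [contrMap_of_isCore hc] at hroot
  exact ⟨g, hg, (congrArg Subtype.val hroot).trans (hcore _ hc)⟩

theorem exists_path_blocks (hT : T.IsTree) (hP : P.IsTree) (hf : IsMinorEmbedding T P f)
    (hB : B.IsPath) :
    ∃ (c₁ cₜ : V) (C : T.Walk c₁ cₜ), C.IsPath ∧
      ∃ z : ℕ → ℕ, z 0 = 0 ∧ z B.support.length = C.support.length ∧
        (∀ i < B.support.length, z i < z (i + 1)) ∧
        ∀ i < B.support.length,
          ∃ g : ContrVert T C (z i) (z (i + 1) - 1) → compSet P B i,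
            IsMinorEmbedding (ContrTree T C (z i) (z (i + 1) - 1)) (compGraph P B i) g ∧
            g none = compRoot P B i := by
  classical
  obtain ⟨x, hx⟩ := hf.1 b₁
  obtain ⟨y, hy⟩ := hf.1 bₛ
  set C := (hT.connected.preconnected x y).some.bypass
  have hC : C.IsPath := Walk.bypass_isPath _
  obtain ⟨ι, hmono, h0, hstep, hlast, hιB, hfι⟩ := hf.exists_monotone_index hT hP hB hC hx hy
  obtain ⟨z, hz0, hzlast, hzlt, hblock⟩ := exists_blocks_of_monotone hmono h0 hstep C.length
  rw [hlast] at hzlast hzlt hblock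
  simp only [Walk.length_support]
  refine ⟨x, y, C, hC, z, hz0, hzlast, hzlt, fun i hi => ?_⟩
  obtain ⟨hlr, hr⟩ := block_bounds hzlt hzlast hi
  obtain ⟨g, hg, hroot⟩ := hf.exists_contrTree hT.isAcyclic hC (H := compGraph P B i)
    (fun h => (deleteEdges_adj.mp h).1) hlr hr
    (hf.inComps_iff_mem_compSet hT hP hB hC hx hy hιB hfι hr (Nat.le_of_lt_succ hi)
      fun j hj => hblock j hj i hi)
    (w₀ := B.getVert i) fun v hv => by
      obtain ⟨j, hlj, hjr, rfl⟩ := (isCore_iff hr).mp hv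
      rw [hfι, (hblock j (by omega) i hi).mpr ⟨hlj, hjr⟩]
  exact ⟨g, hg, Subtype.ext (hroot.trans (compRoot_val (Nat.le_of_lt_succ hi)).symm)⟩

end IsMinorEmbedding

end Forward

section Backward

variable {V W : Type*} {T : SimpleGraph V} {P : SimpleGraph W} {c₁ cₜ : V} {C : T.Walk c₁ cₜ}
  {b₁ bₛ : W} {B : P.Walk b₁ bₛ} {z : ℕ → ℕ} {s : ℕ}

lemma existsUnique_block_inComps (hT : T.IsTree) (hC : C.IsPath) (h0 : z 0 = 0)
    (hlast : z s = C.length + 1) (hz : ∀ i < s, z i < z (i + 1)) (v : V) :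
    ∃ i < s, inComps T C (z i) (z (i + 1) - 1) v ∧
      ∀ i' < s, inComps T C (z i') (z (i' + 1) - 1) v → i' = i := by
  have hr : ∀ i < s, z (i + 1) - 1 ≤ C.length := fun i hi => (block_bounds hz hlast hi).2
  obtain ⟨j, hj, hjv⟩ := C.exists_reachable_deleteEdges_getVert hT.connected v
  obtain ⟨i, hi, hzi, hjz⟩ := exists_block h0 hz (show j < z s by omega)
  refine ⟨i, hi, (inComps_iff (hr i hi)).mpr ⟨j, hzi, by omega, hjv⟩, fun i' hi' hv => ?_⟩
  obtain ⟨j', hzj', hj'z, hj'v⟩ := (inComps_iff (hr i' hi')).mp hv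
  obtain rfl := hC.eq_of_reachable_deleteEdges_getVert hT.isAcyclic ((hj'z.trans (hr i' hi')))
    hj (hj'v.trans hjv.symm)
  have := hz i' hi'
  exact block_unique hz hi' hi ⟨hzj', by omega⟩ ⟨hzi, hjz⟩

/-- The edge of `C` leaving the `k`-th block realizes the backbone edge `b_k b_{k+1}`. -/
lemma exists_adj_of_mem_edges {f : V → W} (hz : ∀ i < B.length + 1, z i < z (i + 1))
    (hlast : z (B.length + 1) = C.length + 1)
    (hcore : ∀ i < B.length + 1, ∀ j, z i ≤ j → j ≤ z (i + 1) - 1 → f (C.getVert j) = B.getVert i)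
    {u w : W} (he : s(u, w) ∈ B.edges) : ∃ a b, T.Adj a b ∧ f a = u ∧ f b = w := by
  obtain ⟨k, hk, hke⟩ := B.mk_mem_edges_iff_exists.mp he
  have hk1 := hz k (by omega)
  have hk2 := hz (k + 1) (by omega)
  have hk3 := (block_bounds hz hlast (show k + 1 < B.length + 1 by omega)).2
  have hadj := C.adj_getVert_succ (i := z (k + 1) - 1) (by omega)
  rw [Nat.sub_add_cancel (by omega)] at hadj
  have h₁ := hcore k (by omega) (z (k + 1) - 1) (by omega) le_rfl
  have h₂ := hcore (k + 1) (by omega) (z (k + 1)) le_rfl (by omega)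
  rcases Sym2.eq_iff.mp hke with ⟨hu, hw⟩ | ⟨hw, hu⟩
  · exact ⟨_, _, hadj, h₁.trans hu, h₂.trans hw⟩
  · exact ⟨_, _, hadj.symm, h₂.trans hu, h₁.trans hw⟩

theorem exists_isMinorEmbedding_of_blocks (hT : T.IsTree) (hP : P.IsTree) (hB : B.IsPath)
    (hC : C.IsPath) (hz0 : z 0 = 0) (hzlen : z B.support.length = C.support.length)
    (hzmono : ∀ i < B.support.length, z i < z (i + 1))
    (hgex : ∀ i < B.support.length,
      ∃ g : ContrVert T C (z i) (z (i + 1) - 1) → compSet P B i,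
        IsMinorEmbedding (ContrTree T C (z i) (z (i + 1) - 1)) (compGraph P B i) g ∧
        g none = compRoot P B i) :
    ∃ f : V → W, IsMinorEmbedding T P f := by
  simp only [Walk.length_support] at hzlen hzmono hgex
  choose g hg hroot using hgex
  have hr : ∀ i < B.length + 1, z (i + 1) - 1 ≤ C.length := fun i hi =>
    (block_bounds hzmono hzlen hi).2
  have hlr : ∀ i < B.length + 1, z i ≤ z (i + 1) - 1 := fun i hi =>
    (block_bounds hzmono hzlen hi).1
  choose blk hblk hvblk huniq using existsUnique_block_inComps hT hC hz0 hzlen hzmono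
  let h : ∀ i : Fin (B.length + 1), {v | inComps T C (z i) (z (i + 1) - 1) v} → compSet P B i :=
    fun i => g i i.2 ∘ contrMap T C (z i) (z (i + 1) - 1)
  let f : V → W := fun v => h ⟨blk v, hblk v⟩ ⟨v, hvblk v⟩
  have hhf : ∀ i v, (h i v : W) = f v := by
    rintro i ⟨v, hv⟩
    obtain rfl : i = ⟨blk v, hblk v⟩ := Fin.ext (huniq v i i.2 hv)
    rfl
  have hcore : ∀ i (hi : i < B.length + 1) j, z i ≤ j → j ≤ z (i + 1) - 1 →
      f (C.getVert j) = B.getVert i := fun i hi j hij hji => by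
    have hc : isCore T C (z i) (z (i + 1) - 1) (C.getVert j) :=
      (isCore_iff (hr i hi)).mpr ⟨j, hij, hji, rfl⟩
    rw [← hhf ⟨i, hi⟩ ⟨_, hc.inComps⟩]
    change (g i hi (contrMap T C _ _ ⟨_, hc.inComps⟩) : W) = _
    rw [contrMap_of_isCore hc, hroot, compRoot_val (by omega)]
  refine ⟨f, IsMinorEmbedding.of_forall_part (H := fun i : Fin (B.length + 1) => compGraph P B i)
    (h := h) (fun i => (isMinorEmbedding_contrMap (hlr i i.2) (hr i i.2)).comp (hg i i.2)) hhf
    (fun w => ?_) (fun i v hv => ?_) (fun u w huw => ?_)⟩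
  · obtain ⟨i, hi, hw⟩ := exists_mem_compSet (B := B) hP.connected w
    exact ⟨⟨i, by omega⟩, hw⟩
  · have hfv : f v ∈ compSet P B (blk v) := (h ⟨blk v, hblk v⟩ ⟨v, hvblk v⟩).2
    rw [eq_of_mem_compSet hP.isAcyclic hB (by omega) (by have := hblk v; omega) hv hfv]
    exact hvblk v
  · by_cases he : s(u, w) ∈ B.edges
    · exact .inr (exists_adj_of_mem_edges hzmono hzlen hcore he)
    · obtain ⟨i, hi, hu, hw, hadj⟩ := exists_compGraph_adj hP.connected huw he
      exact .inl ⟨⟨i, by omega⟩, hu, hw, hadj⟩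

end Backward

theorem stmt_16_general {V W : Type*}
    (T : SimpleGraph V) (P : SimpleGraph W)
    (hT : T.IsTree) (hP : P.IsTree)
    {b₁ bₛ : W} (B : P.Walk b₁ bₛ) (hB : B.IsPath) :
    (∃ f : V → W, IsMinorEmbedding T P f) ↔
    ∃ (c₁ cₜ : V) (C : T.Walk c₁ cₜ), C.IsPath ∧
      ∃ z : ℕ → ℕ, z 0 = 0 ∧ z B.support.length = C.support.length ∧
        (∀ i < B.support.length, z i < z (i + 1)) ∧
        ∀ i < B.support.length,
          ∃ g : ContrVert T C (z i) (z (i + 1) - 1) → compSet P B i,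
            IsMinorEmbedding (ContrTree T C (z i) (z (i + 1) - 1)) (compGraph P B i) g ∧
            g none = compRoot P B i :=
  ⟨fun ⟨_, hf⟩ => hf.exists_path_blocks hT hP hB,
    fun ⟨_, _, _, hC, _, hz0, hzlen, hzmono, hg⟩ =>
      exists_isMinorEmbedding_of_blocks hT hP hB hC hz0 hzlen hzmono hg⟩

/-- Lobster–lobster containment. `T` and `P` are lobsters, `|V(P)| ≥ 2`, and
`B = (b_1,…,b_s)` is a backbone of `P`. Then `P` is a minor of `T` iff there are a path
`C = (c_1,…,c_t)` in `T` and indices `0 = z_0 < z_1 < … < z_s = t` (0-based) such that for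
every `i < s` there is a minor embedding `g` of the component `P_i` of `P − E(B)` containing
`b_i` in the tree `T_{z_i, z_{i+1}−1}` (obtained from the union of the components of
`T − E(C)` containing `c_{z_i},…,c_{z_{i+1}−1}` by contracting `{c_{z_i},…,c_{z_{i+1}−1}}`
to a single vertex `w_i`) with `g(w_i) = b_i`. -/
theorem stmt_16 {V W : Type*} [Fintype V] [Fintype W]
    (T : SimpleGraph V) (P : SimpleGraph W)
    (hT : T.IsTree) (hP : P.IsTree) (hW : 2 ≤ Fintype.card W)
    (hTlob : ∃ (u v : V) (w : T.Walk u v), w.IsPath ∧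
      ∀ x : V, ∃ y ∈ w.support, T.dist x y ≤ 2)
    {b₁ bₛ : W} (B : P.Walk b₁ bₛ) (hB : B.IsPath)
    (hBack : ∀ v : W, ∃ y ∈ B.support, P.dist v y ≤ 2) :
    (∃ f : V → W, IsMinorEmbedding T P f) ↔
    ∃ (c₁ cₜ : V) (C : T.Walk c₁ cₜ), C.IsPath ∧
      ∃ z : ℕ → ℕ, z 0 = 0 ∧ z B.support.length = C.support.length ∧
        (∀ i < B.support.length, z i < z (i + 1)) ∧
        ∀ i < B.support.length,
          ∃ g : ContrVert T C (z i) (z (i + 1) - 1) → compSet P B i,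
            IsMinorEmbedding (ContrTree T C (z i) (z (i + 1) - 1)) (compGraph P B i) g ∧
            g none = compRoot P B i :=
  stmt_16_general T P hT hP B hB
end

section
/- Every finite tree of pathwidth at most 1 is a caterpillar, i.e., has path eccentricity at most 1. -/
/-- A path decomposition of `G`: a finite sequence of bags covering all vertices and all
edges, in which the set of bags containing any fixed vertex is an interval of indices. -/
def IsPathDecomp {V : Type*} (G : SimpleGraph V) {r : ℕ} (X : Fin r → Set V) : Prop :=
  (∀ v, ∃ i, v ∈ X i) ∧
  (∀ ⦃u v⦄, G.Adj u v → ∃ i, u ∈ X i ∧ v ∈ X i) ∧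
  (∀ v (i j k : Fin r), i ≤ j → j ≤ k → v ∈ X i → v ∈ X k → v ∈ X j)

/-- The pathwidth of `G`: the minimum over all path decompositions of the maximum bag size
minus one. -/
noncomputable def pathwidth {V : Type*} (G : SimpleGraph V) : ℕ :=
  sInf {w | ∃ (r : ℕ) (X : Fin r → Set V), IsPathDecomp G X ∧ ∀ i, (X i).ncard ≤ w + 1}

/-- The path eccentricity of a graph `T`: the minimum, over all paths `B` of `T`, of the
maximum distance from a vertex of `T` to `B`. -/
noncomputable def pathEcc {V : Type*} (T : SimpleGraph V) : ℕ :=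
  sInf {k | ∃ (u v : V) (w : T.Walk u v), w.IsPath ∧ ∀ x : V, ∃ y ∈ w.support, T.dist x y ≤ k}

/-!
Take a path decomposition with bags of size at most two and a longest path `p`. If some vertex
were at distance at least two from `p`, a shortest route to `p` would end in two vertices `a' a`
off `p` attached at a vertex `y` of `p`; maximality of `p` leaves two more vertices of `p` on
either side of `y`. These form a subdivided claw with centre `y`, which has no such decomposition:
the bag of each leg's outer edge misses `y`, so it lies before or after the interval of bags
containing `y`, and two legs on the same side force three vertices into one bag.
-/

theorem Set.OrdConnected.lt_iff_lt_of_notMem {α : Type*} [LinearOrder α] {s : Set α}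
    (hs : s.OrdConnected) {i i' j : α} (hj : j ∉ s) (hi : i ∈ s) (hi' : i' ∈ s) :
    j < i ↔ j < i' := by
  constructor <;> intro h <;> by_contra! h'
  · exact hj (hs.out hi' hi ⟨h', h.le⟩)
  · exact hj (hs.out hi hi' ⟨h', h.le⟩)

section Bags

variable {V ι : Type*} [Finite V] [LinearOrder ι] {X : ι → Set V}

theorem false_of_legs_before (hconv : ∀ v, {i | v ∈ X i}.OrdConnected)
    (hsize : ∀ i, (X i).ncard ≤ 2) {z z' w w' : V} {iz jz iw jw : ι}
    (hz : z ∈ X iz) (hzj : z ∈ X jz) (hz'j : z' ∈ X jz)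
    (hw : w ∈ X iw) (hwj : w ∈ X jw) (hw'j : w' ∈ X jw)
    (hzw : z ≠ w) (hzw' : z ≠ w') (hz'w : z' ≠ w) (hzz' : z ≠ z') (hww' : w ≠ w')
    (hjz : jz ≤ iw) (hjw : jw ≤ iz) : False := by
  rcases le_total jz jw with h | h
  · exact (hsize jw).not_gt <| (Set.two_lt_ncard).2
      ⟨z, (hconv z).out hzj hz ⟨h, hjw⟩, w, hwj, w', hw'j, hzw, hzw', hww'⟩
  · exact (hsize jz).not_gt <| (Set.two_lt_ncard).2
      ⟨w, (hconv w).out hwj hw ⟨h, hjz⟩, z, hzj, z', hz'j, hzw.symm, hz'w.symm, hzz'⟩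

theorem legs_on_opposite_sides (hconv : ∀ v, {i | v ∈ X i}.OrdConnected)
    (hsize : ∀ i, (X i).ncard ≤ 2) {y z z' w w' : V} {iz jz iw jw : ι}
    (hyz : y ∈ X iz) (hz : z ∈ X iz) (hzj : z ∈ X jz) (hz'j : z' ∈ X jz) (hyjz : y ∉ X jz)
    (hyw : y ∈ X iw) (hw : w ∈ X iw) (hwj : w ∈ X jw) (hw'j : w' ∈ X jw) (hyjw : y ∉ X jw)
    (hzw : z ≠ w) (hzw' : z ≠ w') (hz'w : z' ≠ w) (hzz' : z ≠ z') (hww' : w ≠ w') :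
    jz < iz ↔ ¬jw < iw := by
  have hjz := (hconv y).lt_iff_lt_of_notMem hyjz hyz hyw
  have hjw := (hconv y).lt_iff_lt_of_notMem hyjw hyw hyz
  constructor
  · intro hz_lt hw_lt
    exact false_of_legs_before hconv hsize hz hzj hz'j hw hwj hw'j hzw hzw' hz'w hzz' hww'
      (hjz.1 hz_lt).le (hjw.1 hw_lt).le
  · intro hw_ge
    by_contra hz_ge
    -- the first case, for the reversed order on `ι`
    exact false_of_legs_before (X := X ∘ OrderDual.ofDual) (fun v => (hconv v).dual)
      hsize hz hzj hz'j hw hwj hw'j hzw hzw' hz'w hzz' hww'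
      (not_lt.1 (hjz.not.1 hz_ge)) (not_lt.1 (hjw.not.1 hw_ge))

theorem false_of_subdivided_claw {G : SimpleGraph V}
    (hedge : ∀ ⦃u v⦄, G.Adj u v → ∃ i, u ∈ X i ∧ v ∈ X i)
    (hconv : ∀ v, {i | v ∈ X i}.OrdConnected) (hsize : ∀ i, (X i).ncard ≤ 2)
    {y a a' b b' c c' : V} (hya : G.Adj y a) (hyb : G.Adj y b) (hyc : G.Adj y c)
    (haa' : G.Adj a a') (hbb' : G.Adj b b') (hcc' : G.Adj c c')
    (hya' : y ≠ a') (hyb' : y ≠ b') (hyc' : y ≠ c')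
    (hab : a ≠ b) (hab' : a ≠ b') (ha'b : a' ≠ b)
    (hac : a ≠ c) (hac' : a ≠ c') (ha'c : a' ≠ c)
    (hbc : b ≠ c) (hbc' : b ≠ c') (hb'c : b' ≠ c) : False := by
  obtain ⟨ia, hyia, haia⟩ := hedge hya
  obtain ⟨ib, hyib, hbib⟩ := hedge hyb
  obtain ⟨ic, hyic, hcic⟩ := hedge hyc
  obtain ⟨ja, haja, ha'ja⟩ := hedge haa'
  obtain ⟨jb, hbjb, hb'jb⟩ := hedge hbb'
  obtain ⟨jc, hcjc, hc'jc⟩ := hedge hcc'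
  have hyja : y ∉ X ja := fun h => (hsize ja).not_gt <| (Set.two_lt_ncard).2
    ⟨y, h, a, haja, a', ha'ja, hya.ne, hya', haa'.ne⟩
  have hyjb : y ∉ X jb := fun h => (hsize jb).not_gt <| (Set.two_lt_ncard).2
    ⟨y, h, b, hbjb, b', hb'jb, hyb.ne, hyb', hbb'.ne⟩
  have hyjc : y ∉ X jc := fun h => (hsize jc).not_gt <| (Set.two_lt_ncard).2
    ⟨y, h, c, hcjc, c', hc'jc, hyc.ne, hyc', hcc'.ne⟩
  have hab_sides := legs_on_opposite_sides hconv hsize hyia haia haja ha'ja hyja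
    hyib hbib hbjb hb'jb hyjb hab hab' ha'b haa'.ne hbb'.ne
  have hac_sides := legs_on_opposite_sides hconv hsize hyia haia haja ha'ja hyja
    hyic hcic hcjc hc'jc hyjc hac hac' ha'c haa'.ne hcc'.ne
  have hbc_sides := legs_on_opposite_sides hconv hsize hyib hbib hbjb hb'jb hyjb
    hyic hcic hcjc hc'jc hyjc hbc hbc' hb'c hbb'.ne hcc'.ne
  tauto

end Bags

theorem IsPathDecomp.ordConnected {V : Type*} {G : SimpleGraph V} {r : ℕ} {X : Fin r → Set V}
    (hX : IsPathDecomp G X) (v : V) : {i | v ∈ X i}.OrdConnected :=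
  ⟨fun i hi k hk j hj => hX.2.2 v i j k hj.1 hj.2 hi hk⟩

theorem exists_isPathDecomp_ncard_le_pathwidth {V : Type*} [Finite V] (G : SimpleGraph V) :
    ∃ (r : ℕ) (X : Fin r → Set V), IsPathDecomp G X ∧ ∀ i, (X i).ncard ≤ pathwidth G + 1 :=
  Nat.sInf_mem (s := {w | ∃ (r : ℕ) (X : Fin r → Set V), IsPathDecomp G X ∧
    ∀ i, (X i).ncard ≤ w + 1}) ⟨Nat.card V, 1, fun _ => Set.univ,
    ⟨fun _ => ⟨0, trivial⟩, fun _ _ _ => ⟨0, trivial, trivial⟩, fun _ _ _ _ _ _ _ _ => trivial⟩,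
    fun _ => by simp [Set.ncard_univ]⟩

namespace SimpleGraph

variable {V : Type*} {G : SimpleGraph V}

theorem Walk.dist_getVert_le {u v : V} (p : G.Walk u v) (i : ℕ) : G.dist u (p.getVert i) ≤ i :=
  (dist_le (p.take i)).trans (by simp [take_length])

theorem exists_isPath_forall_length_le [Finite V] [Nonempty V] (G : SimpleGraph V) :
    ∃ (u v : V) (p : G.Walk u v), p.IsPath ∧
      ∀ (u' v' : V) (q : G.Walk u' v'), q.IsPath → q.length ≤ p.length := by
  classical
  have := Fintype.ofFinite V
  inhabit V
  have : Nonempty (Σ u v, G.Path u v) := ⟨⟨default, default, Path.nil⟩⟩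
  obtain ⟨⟨u, v, p⟩, hp⟩ := Finite.exists_max fun q : Σ u v, G.Path u v => q.2.2.1.length
  exact ⟨u, v, p, p.2, fun u' v' q hq => hp ⟨u', v', q, hq⟩⟩

namespace Walk

variable {u v : V} {p : G.Walk u v}

theorem IsPath.two_le_of_longest (hp : p.IsPath)
    (hmax : ∀ (u' v' : V) (q : G.Walk u' v'), q.IsPath → q.length ≤ p.length) {k : ℕ} {a a' : V}
    (ha : a ∉ p.support) (ha' : a' ∉ p.support) (haa' : G.Adj a' a) (hay : G.Adj a (p.getVert k)) :
    2 ≤ k := by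
  have hsub := (p.isSubwalk_drop k).support_subset
  have hq : (cons haa' (cons hay (p.drop k))).IsPath := by
    simp only [cons_isPath_iff, support_cons, List.mem_cons, not_or]
    exact ⟨⟨hp.drop k, fun h => ha (hsub h)⟩, haa'.ne, fun h => ha' (hsub h)⟩
  have := hmax _ _ _ hq
  simp only [length_cons, drop_length] at this
  omega

theorem IsPath.two_le_and_add_two_le_of_longest (hp : p.IsPath)
    (hmax : ∀ (u' v' : V) (q : G.Walk u' v'), q.IsPath → q.length ≤ p.length) {k : ℕ}
    (hk : k ≤ p.length) {a a' : V} (ha : a ∉ p.support) (ha' : a' ∉ p.support)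
    (haa' : G.Adj a' a) (hay : G.Adj a (p.getVert k)) : 2 ≤ k ∧ k + 2 ≤ p.length := by
  refine ⟨hp.two_le_of_longest hmax ha ha' haa' hay, ?_⟩
  have := hp.reverse.two_le_of_longest (k := p.length - k) (by simpa using hmax)
    (by simpa using ha) (by simpa using ha') haa'
    (by rwa [getVert_reverse, Nat.sub_sub_self hk])
  omega

end Walk

theorem Connected.exists_leg_of_two_le_dist (hconn : G.Connected) {u v : V} (p : G.Walk u v)
    {x : V} (hx : ∀ y ∈ p.support, 2 ≤ G.dist x y) :
    ∃ y ∈ p.support, ∃ a a', a ∉ p.support ∧ a' ∉ p.support ∧ G.Adj a' a ∧ G.Adj a y := by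
  classical
  obtain ⟨y, hy, hmin⟩ := p.support.toFinset.exists_min_image (G.dist x) ⟨u, by simp⟩
  rw [List.mem_toFinset] at hy
  obtain ⟨q, hq⟩ := hconn.exists_walk_length_eq_dist x y
  have hd := hx y hy
  have hfar : ∀ i < G.dist x y, q.getVert i ∉ p.support := fun i hi h => by
    have := hmin _ (List.mem_toFinset.2 h)
    have := q.dist_getVert_le i
    omega
  refine ⟨y, hy, _, _, hfar (G.dist x y - 1) (by omega), hfar (G.dist x y - 2) (by omega), ?_, ?_⟩
  · convert q.adj_getVert_succ (i := G.dist x y - 2) (by omega) using 2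
    omega
  · convert q.adj_getVert_succ (i := G.dist x y - 1) (by omega)
    rw [show G.dist x y - 1 + 1 = q.length by omega, Walk.getVert_length]

end SimpleGraph

theorem IsPathDecomp.exists_mem_support_dist_le_one_of_longest {V : Type*} [Finite V]
    {G : SimpleGraph V} {r : ℕ} {X : Fin r → Set V} (hX : IsPathDecomp G X)
    (hsize : ∀ i, (X i).ncard ≤ 2) (hconn : G.Connected) {u v : V} {p : G.Walk u v}
    (hp : p.IsPath) (hmax : ∀ (u' v' : V) (q : G.Walk u' v'), q.IsPath → q.length ≤ p.length)
    (x : V) : ∃ y ∈ p.support, G.dist x y ≤ 1 := by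
  by_contra! hfar
  obtain ⟨y, hy, a, a', ha, ha', haa', hay⟩ := hconn.exists_leg_of_two_le_dist p hfar
  obtain ⟨k, rfl, hk⟩ := SimpleGraph.Walk.mem_support_iff_exists_getVert.1 hy
  obtain ⟨hk₁, hk₂⟩ := hp.two_le_and_add_two_le_of_longest hmax hk ha ha' haa' hay
  have hinj : ∀ i j, i ≤ p.length → j ≤ p.length → i ≠ j → p.getVert i ≠ p.getVert j :=
    fun i j hi hj => mt fun h => hp.getVert_injOn hi hj h
  have hoff : ∀ {z} i, z ∉ p.support → z ≠ p.getVert i := fun i hz h =>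
    hz (h ▸ p.getVert_mem_support i)
  have hadj : ∀ i < p.length, G.Adj (p.getVert i) (p.getVert (i + 1)) :=
    fun i hi => p.adj_getVert_succ hi
  -- the claw: centre `p.getVert k`, legs `a a'` off `p`, and two legs forwards and backwards on `p`
  exact false_of_subdivided_claw hX.2.1 hX.ordConnected hsize hay.symm (hadj k (by omega))
    (by simpa [Nat.sub_add_cancel (by omega : 1 ≤ k)] using (hadj (k - 1) (by omega)).symm)
    haa'.symm (hadj (k + 1) (by omega))
    (by simpa [show k - 2 + 1 = k - 1 by omega] using (hadj (k - 2) (by omega)).symm)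
    (hoff k ha').symm (hinj _ _ hk (by omega) (by omega)) (hinj _ _ hk (by omega) (by omega))
    (hoff _ ha) (hoff _ ha) (hoff _ ha') (hoff _ ha) (hoff _ ha) (hoff _ ha')
    (hinj _ _ (by omega) (by omega) (by omega)) (hinj _ _ (by omega) (by omega) (by omega))
    (hinj _ _ (by omega) (by omega) (by omega))

/-- Every finite tree of pathwidth at most 1 is a caterpillar, i.e. has path eccentricity at
most 1. -/
theorem stmt_18 {V : Type*} [Fintype V] (T : SimpleGraph V) (hT : T.IsTree)
    (hpw : pathwidth T ≤ 1) : pathEcc T ≤ 1 := by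
  obtain ⟨r, X, hX, hsize⟩ := exists_isPathDecomp_ncard_le_pathwidth T
  have := hT.connected.nonempty
  obtain ⟨u, v, p, hp, hmax⟩ := T.exists_isPath_forall_length_le
  exact Nat.sInf_le ⟨u, v, p, hp, hX.exists_mem_support_dist_le_one_of_longest
    (fun i => (hsize i).trans (by omega)) hT.connected hp hmax⟩
end
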